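/- arXiv:1702.06969 — 2 statements merged into one kernel-verified Lean document; each statement's English description precedes it below -/
import Mathlib

section
/- Let G be a finite simple graph with nonnegative edge weights x, such that every odd cycle of G has total weight at least 1, and let 0 < δ ≤ 1. Let C be an odd cycle in G and let v0 be a vertex of C. If d_x(v0, v) ≤ (1 − δ)/2 for every vertex v of C, then C contains an edge e with x_e ≥ δ. -/
open SimpleGraph

/-- The weight of a walk: the sum of the weights of its edges, counted with multiplicity. -/
def walkWeight {V : Type*} {G : SimpleGraph V} (x : Sym2 V → ℝ) {u v : V}
    (p : G.Walk u v) : ℝ :=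
  (p.edges.map x).sum

/-- The shortest-path distance between `u` and `v` induced by the edge weights `x`. -/
noncomputable def wdist {V : Type*} (G : SimpleGraph V) (x : Sym2 V → ℝ) (u v : V) : ℝ :=
  sInf {r | ∃ p : G.Walk u v, walkWeight x p = r}

section Aux

variable {V : Type*} {G : SimpleGraph V} (x : Sym2 V → ℝ)

lemma walkWeight_cons {u v w : V} (h : G.Adj u v) (p : G.Walk v w) :
    walkWeight x (Walk.cons h p) = x s(u, v) + walkWeight x p := by
  simp [walkWeight]

lemma walkWeight_append {u v w : V} (p : G.Walk u v) (q : G.Walk v w) :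
    walkWeight x (p.append q) = walkWeight x p + walkWeight x q := by
  simp [walkWeight, Walk.edges_append]

lemma walkWeight_reverse {u v : V} (p : G.Walk u v) :
    walkWeight x p.reverse = walkWeight x p := by
  simp [walkWeight, Walk.edges_reverse, List.sum_reverse]

lemma walkWeight_nonneg (hx : ∀ e ∈ G.edgeSet, 0 ≤ x e) {u v : V} (p : G.Walk u v) :
    0 ≤ walkWeight x p := by
  apply List.sum_nonneg
  intro r hr
  obtain ⟨e, he, rfl⟩ := List.mem_map.mp hr
  exact hx e (p.edges_subset_edgeSet he)

lemma getVert_edge_mem {a c : V} (p : G.Walk a c) :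
    ∀ i : ℕ, i < p.length → s(p.getVert i, p.getVert (i + 1)) ∈ p.edges := by
  induction p with
  | nil => intro i hi; simp at hi
  | cons h q ih =>
    intro i hi
    cases i with
    | zero =>
      simp [Walk.getVert_zero, Walk.getVert_cons_succ, Walk.edges_cons]
    | succ j =>
      simp only [Walk.length_cons] at hi
      simp only [Walk.getVert_cons_succ, Walk.edges_cons, List.mem_cons]
      exact Or.inr (ih j (by omega))

lemma edge_end_start : ∀ {w v : V} (p : G.Walk w v), p.support.Nodup →
    s(v, w) ∈ p.edges → p.length = 1 := by
  intro w v p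
  induction p with
  | nil => intro _ he; simp at he
  | @cons w w' v h' q ih =>
    intro hnd he
    simp only [Walk.support_cons, List.nodup_cons] at hnd
    simp only [Walk.edges_cons, List.mem_cons] at he
    rcases he with he | he
    · rw [Sym2.eq_iff] at he
      rcases he with ⟨h1, h2⟩ | ⟨h1, h2⟩
      · exact absurd (h2 ▸ h') (G.irrefl)
      · subst h1
        cases q with
        | nil => simp
        | cons hq q' =>
          exact absurd (Walk.end_mem_support q') (by
            simpa [Walk.support_cons] using hnd.2)
    · exact absurd (q.snd_mem_support_of_mem_edges he) hnd.1

lemma odd_closed_walk_cycle (hx : ∀ e ∈ G.edgeSet, 0 ≤ x e) :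
    ∀ (n : ℕ) {v : V} (W : G.Walk v v), W.length = n → Odd n →
      ∃ (w : V) (D : G.Walk w w), D.IsCycle ∧ Odd D.length ∧
        walkWeight x D ≤ walkWeight x W := by
  intro n
  induction n using Nat.strong_induction_on with
  | _ n ih =>
    intro v W hlen hodd
    cases W with
    | nil =>
      simp only [Walk.length_nil] at hlen
      subst hlen
      exact absurd hodd (by simp [Nat.odd_iff])
    | @cons _ w _ h W' =>
      simp only [Walk.length_cons] at hlen
      by_cases hnd : W'.support.Nodup
      · -- W is a cycle
        have hp : W'.IsPath := Walk.IsPath.mk' hnd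
        have hne : s(v, w) ∉ W'.edges := by
          intro hmem
          have h1 := edge_end_start W' hnd hmem
          rw [Nat.odd_iff] at hodd
          omega
        have hcyc : (Walk.cons h W').IsCycle := (Walk.cons_isCycle_iff W' h).mpr ⟨hp, hne⟩
        exact ⟨v, Walk.cons h W', hcyc, by simp only [Walk.length_cons, hlen]; exact hodd,
          le_refl _⟩
      · -- there is a repeated vertex; split
        classical
        obtain ⟨a, hdup⟩ := List.exists_duplicate_iff_not_nodup.mpr hnd
        have ha : a ∈ W'.support := hdup.mem
        have hcount : 2 ≤ W'.support.count a := List.duplicate_iff_two_le_count.mp hdup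
        have hspec := W'.take_spec ha
        have hcount1 := W'.count_support_takeUntil_eq_one ha
        have hDrtail : a ∈ (W'.dropUntil a ha).support.tail := by
          have hc : W'.support.count a =
              (W'.takeUntil a ha).support.count a +
              ((W'.dropUntil a ha).support.tail).count a := by
            conv_lhs => rw [← hspec]
            rw [Walk.support_append, List.count_append]
          rw [hcount1] at hc
          have : 1 ≤ ((W'.dropUntil a ha).support.tail).count a := by omega
          exact List.count_pos_iff.mp (by omega)
        have hDrnotnil : ¬ (W'.dropUntil a ha).Nil := by
          intro hnil
          rw [Walk.nil_iff_support_eq] at hnil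
          rw [hnil] at hDrtail
          simp at hDrtail
        obtain ⟨b, h2, Dr2, hcons⟩ := Walk.not_nil_iff.mp hDrnotnil
        have ha4 : a ∈ Dr2.support := by
          rw [hcons] at hDrtail
          simpa [Walk.support_cons] using hDrtail
        have hspec2 := Dr2.take_spec ha4
        set T := W'.takeUntil a ha with hT
        set T2 := Dr2.takeUntil a ha4 with hT2
        set R2 := Dr2.dropUntil a ha4 with hR2
        -- the two closed walks
        set B : G.Walk a a := Walk.cons h2 T2 with hB
        set R : G.Walk v v := Walk.cons h (T.append R2) with hR
        have h5 : Dr2.length = T2.length + R2.length := by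
          conv_lhs => rw [← hspec2]
          rw [Walk.length_append]
        have h6 : walkWeight x Dr2 = walkWeight x T2 + walkWeight x R2 := by
          conv_lhs => rw [← hspec2]
          rw [walkWeight_append]
        have hlenW' : W'.length = T.length + (1 + (T2.length + R2.length)) := by
          conv_lhs => rw [← hspec]
          rw [Walk.length_append, hcons, Walk.length_cons, h5]
          omega
        have hwW' : walkWeight x W' =
            walkWeight x T + (x s(a, b) + (walkWeight x T2 + walkWeight x R2)) := by
          conv_lhs => rw [← hspec]
          rw [walkWeight_append, hcons, walkWeight_cons, h6]
        have hwW : walkWeight x (Walk.cons h W') = walkWeight x B + walkWeight x R := by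
          rw [walkWeight_cons, hwW', hB, hR, walkWeight_cons, walkWeight_cons,
            walkWeight_append]
          ring
        have hlB : B.length = 1 + T2.length := by simp [hB, Walk.length_cons]; omega
        have hlR : R.length = 1 + (T.length + R2.length) := by
          simp [hR, Walk.length_cons, Walk.length_append]; omega
        have hBnonneg := walkWeight_nonneg x hx B
        have hRnonneg := walkWeight_nonneg x hx R
        rw [Nat.odd_iff] at hodd
        rcases Nat.even_or_odd B.length with heB | hoB
        · -- R has odd length
          have hoR : Odd R.length := by
            rw [Nat.even_iff] at heB; rw [Nat.odd_iff]; omega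
          obtain ⟨w', D, hD1, hD2, hD3⟩ := ih R.length (by omega) R rfl hoR
          exact ⟨w', D, hD1, hD2, by linarith⟩
        · obtain ⟨w', D, hD1, hD2, hD3⟩ := ih B.length (by omega) B rfl hoB
          exact ⟨w', D, hD1, hD2, by linarith⟩

end Aux

/-- If every odd cycle has total weight at least 1, `0 < δ ≤ 1`, and `C` is an odd cycle based
at `v0` with `d_x(v0, v) ≤ (1 - δ)/2` for every vertex `v` of `C`, then `C` contains an edge
of weight at least `δ`. -/
theorem stmt1 {V : Type*} [Fintype V] (G : SimpleGraph V) (x : Sym2 V → ℝ) (δ : ℝ)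
    (hδ0 : 0 < δ) (hδ1 : δ ≤ 1)
    (hx : ∀ e ∈ G.edgeSet, 0 ≤ x e)
    (hodd : ∀ (v : V) (C : G.Walk v v), C.IsCycle → Odd C.length → 1 ≤ walkWeight x C)
    (v0 : V) (C : G.Walk v0 v0) (hC : C.IsCycle) (hCodd : Odd C.length)
    (hnear : ∀ v ∈ C.support, wdist G x v0 v ≤ (1 - δ) / 2) :
    ∃ e ∈ C.edges, δ ≤ x e := by
  classical
  by_contra hcon
  push_neg at hcon
  set n := C.length with hn
  have hn1 : 1 ≤ n := by
    rcases hCodd with ⟨k, hk⟩; omega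
  have hene : C.edges.toFinset.Nonempty := by
    refine ⟨s(C.getVert 0, C.getVert 1), ?_⟩
    rw [List.mem_toFinset]
    exact getVert_edge_mem C 0 (by omega)
  obtain ⟨e₀, he₀, hmax⟩ := Finset.exists_max_image C.edges.toFinset x hene
  set m := x e₀ with hm
  have hmδ : m < δ := hcon e₀ (List.mem_toFinset.mp he₀)
  set ε := (δ - m) / 2 with hε
  have hε0 : 0 < ε := by rw [hε]; linarith
  set bnd := (1 - δ) / 2 + ε with hbnd
  have H : ∀ u : V, u ∈ C.support → ∃ Q : G.Walk v0 u, walkWeight x Q < bnd := by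
    intro u hu
    have hSne : {r | ∃ p : G.Walk v0 u, walkWeight x p = r}.Nonempty :=
      ⟨walkWeight x (C.takeUntil u hu), C.takeUntil u hu, rfl⟩
    have hSbdd : BddBelow {r | ∃ p : G.Walk v0 u, walkWeight x p = r} := by
      refine ⟨0, ?_⟩
      rintro r ⟨p, rfl⟩
      exact walkWeight_nonneg x hx p
    have h1 : wdist G x v0 u ≤ (1 - δ) / 2 := hnear u hu
    have h2 : sInf {r | ∃ p : G.Walk v0 u, walkWeight x p = r} < bnd :=
      lt_of_le_of_lt h1 (by rw [hbnd]; linarith)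
    obtain ⟨r, ⟨p, rfl⟩, hr⟩ := (csInf_lt_iff hSbdd hSne).mp h2
    exact ⟨p, hr⟩
  choose Q hQ using H
  set L : V → ℕ := fun u => if h : u ∈ C.support then (Q u h).length else 0 with hL
  have hLQ : ∀ (u : V) (h : u ∈ C.support), L u = (Q u h).length := by
    intro u h
    simp only [hL, dif_pos h]
  set b : ℕ → ZMod 2 := fun i => (L (C.getVert i) : ZMod 2) with hb
  have key : ∃ i, i < n ∧ b (i + 1) = b i := by
    by_contra hk
    push_neg at hk
    have hdec : ∀ p q : ZMod 2, p ≠ q → p = q + 1 := by decide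
    have hstep : ∀ i, i < n → b (i + 1) = b i + 1 := fun i hi => hdec _ _ (hk i hi)
    have hall : ∀ i, i ≤ n → b i = b 0 + i := by
      intro i
      induction i with
      | zero => intro _; simp
      | succ j ihj =>
        intro hj
        rw [hstep j (by omega), ihj (by omega)]
        push_cast
        ring
    have hbn : b n = b 0 := by
      have e1 : C.getVert n = v0 := by rw [hn]; exact C.getVert_length
      have e2 : C.getVert 0 = v0 := C.getVert_zero
      simp only [hb, e1, e2]
    have hthis := hall n le_rfl
    have h7 : b 0 + (n : ZMod 2) = b 0 + 0 := by
      rw [add_zero, ← hthis, hbn]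
    have hzero : (n : ZMod 2) = 0 := add_left_cancel h7
    have h8 : (n : ZMod 2) = ((0 : ℕ) : ZMod 2) := by simpa using hzero
    rw [ZMod.natCast_eq_natCast_iff'] at h8
    rw [Nat.odd_iff] at hCodd
    simp at h8
    omega
  obtain ⟨i, hi, hpar⟩ := key
  have hu : C.getVert i ∈ C.support :=
    Walk.mem_support_iff_exists_getVert.mpr ⟨i, rfl, by omega⟩
  have hu' : C.getVert (i + 1) ∈ C.support :=
    Walk.mem_support_iff_exists_getVert.mpr ⟨i + 1, rfl, by omega⟩
  have hadj : G.Adj (C.getVert i) (C.getVert (i + 1)) := C.adj_getVert_succ (by omega)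
  set Qu := Q (C.getVert i) hu with hQu
  set Qu' := Q (C.getVert (i + 1)) hu' with hQu'
  set W : G.Walk v0 v0 := Qu.append (Walk.cons hadj Qu'.reverse) with hW
  have hlW : W.length = Qu.length + (1 + Qu'.length) := by
    rw [hW, Walk.length_append, Walk.length_cons, Walk.length_reverse]
    omega
  have hwW : walkWeight x W =
      walkWeight x Qu + (x s(C.getVert i, C.getVert (i + 1)) + walkWeight x Qu') := by
    rw [hW, walkWeight_append, walkWeight_cons, walkWeight_reverse]
  have hparQ : Qu.length % 2 = Qu'.length % 2 := by
    have h1 : b i = ((Qu.length : ℕ) : ZMod 2) := by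
      simp only [hb]
      rw [hLQ _ hu]
    have h2 : b (i + 1) = ((Qu'.length : ℕ) : ZMod 2) := by
      simp only [hb]
      rw [hLQ _ hu']
    have := hpar
    rw [h1, h2] at this
    rw [ZMod.natCast_eq_natCast_iff'] at this
    omega
  have hoW : Odd W.length := by
    rw [Nat.odd_iff, hlW]
    omega
  obtain ⟨w', D, hD1, hD2, hD3⟩ := odd_closed_walk_cycle x hx W.length W rfl hoW
  have h1 := hodd w' D hD1 hD2
  have h2 : x s(C.getVert i, C.getVert (i + 1)) ≤ m :=
    hmax _ (List.mem_toFinset.mpr (getVert_edge_mem C i hi))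
  have h3 := hQ (C.getVert i) hu
  have h4 := hQ (C.getVert (i + 1)) hu'
  rw [← hQu] at h3
  rw [← hQu'] at h4
  have hb1 : bnd = (1 - δ) / 2 + (δ - m) / 2 := by rw [hbnd, hε]
  clear_value n m ε bnd Qu Qu' W
  linarith
end

section
/- Let (G, c) be a Max-2Lin_k instance with nonnegative edge costs c_e and nonnegative edge weights x_e such that every inconsistent cycle of G has total weight at least 1. Let F1 = {e : x_e ≥ 1/2} and let G' = G − F1. Let P be a random partition of the vertex set such that, almost surely, d_{x,G'}(u,v) ≤ 1/4 for every pair of vertices u, v in the same cluster, and such that Pr[P(u) ≠ P(v)] ≤ 4D·x_{uv} for every edge uv of G', where D ≥ 0. Let F2 be the (random) set of edges uv of G' with P(u) ≠ P(v). Then the instance restricted to G − (F1 ∪ F2) is almost surely satisfiable, and E[ Σ_{e ∈ F1 ∪ F2} c_e ] ≤ (2 + 4D) · Σ_{e ∈ E(G)} c_e x_e. -/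
open SimpleGraph

/-- The sum of the constants `c` along a walk: `c_{v_0 v_1} + c_{v_1 v_2} + ⋯ + c_{v_{l-1} v_l}`. -/
def walkSum {V : Type*} {k : ℕ} {G : SimpleGraph V} (c : V → V → ZMod k) {u v : V}
    (p : G.Walk u v) : ZMod k :=
  (p.darts.map (fun d => c d.fst d.snd)).sum

/-!
Every edge `uv` that survives the rounding has `x_uv < 1/2` and joins two vertices of one
cluster, and clusters have `x`-diameter at most `1/4` in `G'`. Fix a root `r` in each component
of the surviving graph and let `f v` be the constraint sum along a near-shortest walk from `r`
to `v`. For a surviving edge `uv`, the walks to `u` and to `v` together with `uv` form a closed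
walk of weight `< 1`. Shortcutting a closed walk of nonzero constraint sum to a path (which is
trivial) must cut off a cycle of nonzero sum and no larger weight, so light closed walks are
consistent, which gives `f v - f u = c_uv`. The cost bound is linearity of expectation: an edge
of `F1` costs `c_e ≤ 2 c_e x_e`, and any other edge is cut with probability at most `4D x_e`.
-/

namespace SimpleGraph.Walk

variable {V : Type*} {k : ℕ} {G H : SimpleGraph V} (c : V → V → ZMod k) (x : Sym2 V → ℝ)

@[simp] lemma walkSum_nil {v : V} : walkSum c (nil : G.Walk v v) = 0 := rfl

@[simp] lemma walkSum_cons {u v w : V} (h : G.Adj u v) (p : G.Walk v w) :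
    walkSum c (cons h p) = c u v + walkSum c p := by
  simp [walkSum]

@[simp] lemma walkSum_append {u v w : V} (p : G.Walk u v) (q : G.Walk v w) :
    walkSum c (p.append q) = walkSum c p + walkSum c q := by
  simp [walkSum, darts_append]

lemma walkSum_reverse (hc : ∀ u v, G.Adj u v → c v u = -c u v) {u v : V} (p : G.Walk u v) :
    walkSum c p.reverse = -walkSum c p := by
  induction p with
  | nil => simp
  | cons h p ih => simp [ih, hc _ _ h, add_comm]

@[simp] lemma walkSum_mapLe (hGH : G ≤ H) {u v : V} (p : G.Walk u v) :
    walkSum c (p.mapLe hGH) = walkSum c p := by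
  simp [walkSum, mapLe, darts_map, Function.comp_def]

@[simp] lemma walkWeight_nil {v : V} : walkWeight x (nil : G.Walk v v) = 0 := rfl

@[simp] lemma walkWeight_cons {u v w : V} (h : G.Adj u v) (p : G.Walk v w) :
    walkWeight x (cons h p) = x s(u, v) + walkWeight x p := by
  simp [walkWeight]

@[simp] lemma walkWeight_append {u v w : V} (p : G.Walk u v) (q : G.Walk v w) :
    walkWeight x (p.append q) = walkWeight x p + walkWeight x q := by
  simp [walkWeight, edges_append]

@[simp] lemma walkWeight_reverse {u v : V} (p : G.Walk u v) :
    walkWeight x p.reverse = walkWeight x p := by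
  simp [walkWeight, edges_reverse, List.sum_reverse]

@[simp] lemma walkWeight_mapLe (hGH : G ≤ H) {u v : V} (p : G.Walk u v) :
    walkWeight x (p.mapLe hGH) = walkWeight x p := by
  simp [walkWeight]

lemma walkWeight_nonneg (hx : ∀ e ∈ G.edgeSet, 0 ≤ x e) {u v : V} (p : G.Walk u v) :
    0 ≤ walkWeight x p :=
  List.sum_nonneg <| by
    simpa using fun e he => hx e (p.edges_subset_edgeSet he)

lemma apply_eq_of_forall_adj {α : Type*} {f : V → α} (hf : ∀ u v, G.Adj u v → f u = f v) :
    ∀ {u v : V}, G.Walk u v → f u = f v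
  | _, _, nil => rfl
  | _, _, cons h p => (hf _ _ h).trans (apply_eq_of_forall_adj hf p)

variable {c x}

lemma isCycle_cons_of_walkSum_ne_zero (hc : ∀ u v, G.Adj u v → c v u = -c u v) {u w : V}
    (h : G.Adj u w) {q : G.Walk w u} (hq : q.IsPath) (hne : walkSum c (cons h q) ≠ 0) :
    (cons h q).IsCycle := by
  rw [isCycle_iff_isPath_tail_and_le_length]
  refine ⟨by simpa using hq, ?_⟩
  cases q with
  | nil => exact absurd rfl h.ne
  | cons _ q =>
    cases q with
    | nil => simp [hc _ _ h] at hne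
    | cons => simp

lemma exists_isCycle_or_isPath [DecidableEq V] (hc : ∀ u v, G.Adj u v → c v u = -c u v)
    (hx : ∀ e ∈ G.edgeSet, 0 ≤ x e) {u v : V} (p : G.Walk u v) :
    (∃ (a : V) (C : G.Walk a a), C.IsCycle ∧ walkSum c C ≠ 0 ∧
        walkWeight x C ≤ walkWeight x p) ∨
      ∃ q : G.Walk u v, q.IsPath ∧ walkSum c q = walkSum c p ∧
        walkWeight x q ≤ walkWeight x p := by
  induction p with
  | nil => exact .inr ⟨nil, .nil, rfl, le_rfl⟩
  | @cons u w v h p ih =>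
    have hxuw : 0 ≤ x s(u, w) := hx _ h
    rcases ih with ⟨a, C, hC, hne, hle⟩ | ⟨q, hq, hsum, hle⟩
    · exact .inl ⟨a, C, hC, hne, by simp only [walkWeight_cons]; linarith⟩
    by_cases hu : u ∈ q.support
    -- shortcutting `cons h q` at `u` cuts off the closed walk `cons h q₁`
    · have hsplit := q.take_spec hu
      set q₁ := q.takeUntil u hu
      set q₂ := q.dropUntil u hu
      have hw₁ := walkWeight_nonneg x hx q₁
      have hw₂ := walkWeight_nonneg x hx q₂
      have hq' : walkWeight x q = walkWeight x q₁ + walkWeight x q₂ := by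
        rw [← walkWeight_append, hsplit]
      by_cases hloop : walkSum c (cons h q₁) = 0
      · refine .inr ⟨q₂, hq.dropUntil hu, ?_, by simp only [walkWeight_cons]; linarith⟩
        rw [walkSum_cons] at hloop ⊢
        rw [← hsum, ← hsplit, walkSum_append]
        linear_combination -hloop
      · exact .inl ⟨u, cons h q₁, isCycle_cons_of_walkSum_ne_zero hc h (hq.takeUntil hu) hloop,
          hloop, by simp only [walkWeight_cons]; linarith⟩
    · exact .inr ⟨cons h q, hq.cons hu, by simp [hsum], by simp only [walkWeight_cons]; linarith⟩

lemma walkSum_eq_zero_of_walkWeight_lt (hc : ∀ u v, G.Adj u v → c v u = -c u v)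
    (hx : ∀ e ∈ G.edgeSet, 0 ≤ x e) {L : ℝ}
    (hincons : ∀ (a : V) (C : G.Walk a a), C.IsCycle → walkSum c C ≠ 0 → L ≤ walkWeight x C)
    {v : V} (W : G.Walk v v) (hW : walkWeight x W < L) : walkSum c W = 0 := by
  classical
  rcases exists_isCycle_or_isPath hc hx W with ⟨a, C, hC, hne, hle⟩ | ⟨q, hq, hsum, -⟩
  · linarith [hincons a C hC hne]
  · rw [← hsum, (isPath_iff_nil.1 hq).eq_nil, walkSum_nil]

lemma walkSum_eq_of_walkWeight_add_lt (hc : ∀ u v, G.Adj u v → c v u = -c u v)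
    (hx : ∀ e ∈ G.edgeSet, 0 ≤ x e) {L : ℝ}
    (hincons : ∀ (a : V) (C : G.Walk a a), C.IsCycle → walkSum c C ≠ 0 → L ≤ walkWeight x C)
    {u v : V} (p q : G.Walk u v) (hpq : walkWeight x p + walkWeight x q < L) :
    walkSum c p = walkSum c q := by
  have := walkSum_eq_zero_of_walkWeight_lt hc hx hincons (p.append q.reverse) (by simpa)
  rw [walkSum_append, walkSum_reverse c hc] at this
  exact add_neg_eq_zero.1 this

end SimpleGraph.Walk

lemma exists_walkWeight_lt_of_wdist_le {V : Type*} {G : SimpleGraph V} {x : Sym2 V → ℝ}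
    {u v : V} (huv : G.Reachable u v) {r ε : ℝ} (hdist : wdist G x u v ≤ r) (hε : 0 < ε) :
    ∃ p : G.Walk u v, walkWeight x p < r + ε := by
  have hne : {r | ∃ p : G.Walk u v, walkWeight x p = r}.Nonempty :=
    huv.elim fun p => ⟨_, p, rfl⟩
  obtain ⟨_, ⟨p, rfl⟩, hp⟩ := Real.lt_sInf_add_pos hne hε
  exact ⟨p, by rw [wdist] at hdist; linarith⟩

open Filter Topology in
lemma exists_potential_of_forall_walkSum_eq {V : Type*} [Finite V] {k : ℕ}
    {G H : SimpleGraph V} (hHG : H ≤ G) {c : V → V → ZMod k} {x : Sym2 V → ℝ} {L r : ℝ}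
    (hlight : ∀ (u v : V) (p q : G.Walk u v), walkWeight x p + walkWeight x q < L →
      walkSum c p = walkSum c q)
    (hedge : ∀ u v, H.Adj u v → 2 * r + x s(u, v) < L)
    (hnear : ∀ u v, H.Reachable u v → ∀ ε > 0, ∃ p : G.Walk u v, walkWeight x p < r + ε) :
    ∃ f : V → ZMod k, ∀ u v, H.Adj u v → f v - f u = c u v := by
  -- one slack `δ` for all edges, since `f` may not depend on the edge
  obtain ⟨δ, hδ, hδpos⟩ : ∃ δ : ℝ, (∀ e : V × V, H.Adj e.1 e.2 →
      2 * (r + δ) + x s(e.1, e.2) < L) ∧ 0 < δ := by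
    refine ((eventually_all.2 fun e => ?_).and self_mem_nhdsWithin).exists (f := 𝓝[>] 0)
    by_cases he : H.Adj e.1 e.2
    · have := hedge _ _ he
      filter_upwards [nhdsWithin_le_nhds (eventually_lt_nhds (half_pos (sub_pos.2 this)))]
        with δ hδ _
      linarith
    · exact .of_forall fun _ h => absurd h he
  let root (v : V) : V := (H.connectedComponentMk v).out
  have hroot (v : V) : H.Reachable (root v) v := ConnectedComponent.exact (Quot.out_eq _)
  choose q hq using fun v => hnear _ _ (hroot v) δ hδpos
  refine ⟨fun v => walkSum c (q v), fun u v huv => ?_⟩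
  have key : ∀ {a b : V}, a = b → ∀ (p : G.Walk a v) (p' : G.Walk b v),
      walkWeight x p + walkWeight x p' < L → walkSum c p = walkSum c p' := by
    rintro a _ rfl
    exact hlight a v
  have hsame : root u = root v := congrArg Quot.out (ConnectedComponent.sound huv.reachable)
  have hlight_uv : walkWeight x ((q u).append (.cons (hHG huv) .nil)) + walkWeight x (q v) < L := by
    simp only [Walk.walkWeight_append, Walk.walkWeight_cons, Walk.walkWeight_nil]
    linarith [hq u, hq v, hδ (u, v) huv]
  have := key hsame _ _ hlight_uv
  simp only [Walk.walkSum_append, Walk.walkSum_cons, Walk.walkSum_nil] at this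
  linear_combination -this

lemma exists_assignment_deleteEdges {V : Type*} [Finite V] {k : ℕ} {G : SimpleGraph V}
    {c : V → V → ZMod k} (hc : ∀ u v, G.Adj u v → c v u = -c u v) {x : Sym2 V → ℝ}
    (hx : ∀ e ∈ G.edgeSet, 0 ≤ x e)
    (hincons : ∀ (a : V) (C : G.Walk a a), C.IsCycle → walkSum c C ≠ 0 → 1 ≤ walkWeight x C)
    {F₁ F₂ : Set (Sym2 V)} (hF₁ : ∀ e ∈ G.edgeSet, e ∉ F₁ → x e < 1 / 2)
    {α : Type*} (p : V → α) (hdiam : ∀ u v, p u = p v → wdist (G.deleteEdges F₁) x u v ≤ 1 / 4)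
    (hF₂ : ∀ u v, (G.deleteEdges F₁).Adj u v → p u ≠ p v → s(u, v) ∈ F₂) :
    ∃ f : V → ZMod k, ∀ u v, (G.deleteEdges (F₁ ∪ F₂)).Adj u v → f v - f u = c u v := by
  have hle : G.deleteEdges (F₁ ∪ F₂) ≤ G.deleteEdges F₁ := deleteEdges_anti Set.subset_union_left
  refine exists_potential_of_forall_walkSum_eq (deleteEdges_le _) (r := 1 / 4)
    (fun u v p q => Walk.walkSum_eq_of_walkWeight_add_lt hc hx hincons p q) ?_ ?_
  · intro u v huv
    rw [deleteEdges_adj, Set.mem_union, not_or] at huv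
    linarith [hF₁ _ huv.1 huv.2.1]
  · intro u v huv ε hε
    have hcluster : p u = p v := huv.elim <| Walk.apply_eq_of_forall_adj fun a b hab => by
      rw [deleteEdges_adj, Set.mem_union, not_or] at hab
      by_contra hne
      exact hab.2.2 (hF₂ a b ((deleteEdges_adj ..).2 ⟨hab.1, hab.2.1⟩) hne)
    obtain ⟨q, hq⟩ := exists_walkWeight_lt_of_wdist_le (huv.mono hle) (hdiam u v hcluster) hε
    exact ⟨q.mapLe (deleteEdges_le _), by simpa using hq⟩

section ExpectedCost

variable {α Ω : Type*} [Fintype Ω] {μ : Ω → ℝ} (hμ : ∑ ω, μ ω = 1) {cost x : α → ℝ}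
  {A : Set α} {F : Ω → Set α} {β : ℝ}
include hμ

open Classical in
lemma sum_mul_indicator_union_le (hβ : 0 ≤ β) {a : α} (hcost : 0 ≤ cost a) (hx : 0 ≤ x a)
    (hA : a ∈ A → 1 / 2 ≤ x a) (hF : a ∉ A → ∑ ω, (if a ∈ F ω then μ ω else 0) ≤ β * x a) :
    ∑ ω, μ ω * (A ∪ F ω).indicator cost a ≤ (2 + β) * (cost a * x a) := by
  by_cases ha : a ∈ A
  · simp only [Set.indicator_of_mem (Set.mem_union_left _ ha), ← Finset.sum_mul, hμ, one_mul]
    nlinarith [hA ha, mul_nonneg (mul_nonneg hβ hcost) hx]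
  · have hind (ω : Ω) :
        μ ω * (A ∪ F ω).indicator cost a = cost a * if a ∈ F ω then μ ω else 0 := by
      by_cases haF : a ∈ F ω <;> simp [Set.indicator, ha, haF, mul_comm]
    rw [Finset.sum_congr rfl fun ω _ => hind ω, ← Finset.mul_sum]
    nlinarith [mul_le_mul_of_nonneg_left (hF ha) hcost, mul_nonneg hcost hx]

open Classical in
lemma sum_mul_sum_indicator_union_le (hβ : 0 ≤ β) (s : Finset α) (hcost : ∀ a ∈ s, 0 ≤ cost a)
    (hx : ∀ a ∈ s, 0 ≤ x a) (hA : ∀ a ∈ s, a ∈ A → 1 / 2 ≤ x a)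
    (hF : ∀ a ∈ s, a ∉ A → ∑ ω, (if a ∈ F ω then μ ω else 0) ≤ β * x a) :
    ∑ ω, μ ω * ∑ a ∈ s, (A ∪ F ω).indicator cost a ≤ (2 + β) * ∑ a ∈ s, cost a * x a := by
  simp_rw [Finset.mul_sum]
  rw [Finset.sum_comm]
  exact Finset.sum_le_sum fun a ha =>
    sum_mul_indicator_union_le hμ hβ (hcost a ha) (hx a ha) (hA a ha) (hF a ha)

end ExpectedCost

lemma Sym2.exists_mk_eq_and_ne_iff {V β : Type*} (p : V → β) {u v : V} :
    (∃ a b, s(u, v) = s(a, b) ∧ p a ≠ p b) ↔ p u ≠ p v := by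
  refine ⟨?_, fun h => ⟨u, v, rfl, h⟩⟩
  rintro ⟨a, b, hab, hne⟩
  rcases Sym2.eq_iff.1 hab with ⟨rfl, rfl⟩ | ⟨rfl, rfl⟩
  exacts [hne, hne.symm]

theorem stmt13_general {V : Type*} [Fintype V] {k : ℕ}
    (G : SimpleGraph V) [DecidableRel G.Adj]
    (c : V → V → ZMod k) (hc : ∀ u v, G.Adj u v → c v u = -c u v)
    (cost x : Sym2 V → ℝ)
    (hcost : ∀ e ∈ G.edgeSet, 0 ≤ cost e) (hx : ∀ e ∈ G.edgeSet, 0 ≤ x e)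
    (hincons : ∀ (v : V) (C : G.Walk v v), C.IsCycle → walkSum c C ≠ 0 →
      1 ≤ walkWeight x C)
    (F1 : Set (Sym2 V)) (hF1 : F1 = {e ∈ G.edgeSet | 1 / 2 ≤ x e})
    (G' : SimpleGraph V) (hG' : G' = G.deleteEdges F1)
    (D : ℝ) (hD : 0 ≤ D)
    (Ω : Type*) [Fintype Ω] (μ : Ω → ℝ) (hμ1 : ∑ ω, μ ω = 1)
    (P : Ω → V → ℕ)
    (hdiam : ∀ ω, 0 < μ ω → ∀ u v, P ω u = P ω v → wdist G' x u v ≤ 1 / 4)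
    (hcut : ∀ u v, G'.Adj u v →
      ∑ ω, (if P ω u ≠ P ω v then μ ω else 0) ≤ 4 * D * x s(u, v))
    (F2 : Ω → Set (Sym2 V))
    (hF2 : ∀ ω, F2 ω = {e | e ∈ G'.edgeSet ∧ ∃ u v, e = s(u, v) ∧ P ω u ≠ P ω v}) :
    (∀ ω, 0 < μ ω → ∃ f : V → ZMod k,
        ∀ u v, (G.deleteEdges (F1 ∪ F2 ω)).Adj u v → f v - f u = c u v) ∧
      ∑ ω, μ ω * ∑ e ∈ G.edgeFinset, Set.indicator (F1 ∪ F2 ω) cost e ≤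
        (2 + 4 * D) * ∑ e ∈ G.edgeFinset, cost e * x e := by
  subst hG'
  have hF2_mk (ω : Ω) {u v : V} (huv : (G.deleteEdges F1).Adj u v) :
      s(u, v) ∈ F2 ω ↔ P ω u ≠ P ω v := by
    simp only [hF2, Set.mem_ofPred_eq, mem_edgeSet, huv, true_and,
      Sym2.exists_mk_eq_and_ne_iff]
  have hx_lt (e : Sym2 V) (he : e ∈ G.edgeSet) (hF1e : e ∉ F1) : x e < 1 / 2 := by
    simpa [hF1, he] using hF1e
  refine ⟨fun ω hω => exists_assignment_deleteEdges hc hx hincons hx_lt (P ω) (hdiam ω hω)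
    fun u v huv hne => (hF2_mk ω huv).2 hne, ?_⟩
  refine sum_mul_sum_indicator_union_le hμ1 (by positivity) _ (by simpa using hcost)
    (by simpa using hx) (fun e he heF1 => by simp_all) fun e he heF1 => ?_
  induction e using Sym2.ind with
  | _ u v =>
  have huv : (G.deleteEdges F1).Adj u v := by simp_all
  simpa only [hF2_mk _ huv] using hcut u v huv

/-- Rounding analysis for `Max-2Lin_k`: deleting the heavy edges `F1` and the (random)
inter-cluster edges `F2` of a low diameter decomposition leaves an almost surely satisfiable
instance, with expected deleted cost at most `(2 + 4D) · Σ c_e x_e`. -/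
theorem stmt13 {V : Type*} [Fintype V] [DecidableEq V] {k : ℕ} (hk : 1 ≤ k)
    (G : SimpleGraph V) [DecidableRel G.Adj]
    (c : V → V → ZMod k) (hc : ∀ u v, G.Adj u v → c v u = -c u v)
    (cost x : Sym2 V → ℝ)
    (hcost : ∀ e ∈ G.edgeSet, 0 ≤ cost e) (hx : ∀ e ∈ G.edgeSet, 0 ≤ x e)
    (hincons : ∀ (v : V) (C : G.Walk v v), C.IsCycle → walkSum c C ≠ 0 →
      1 ≤ walkWeight x C)
    (F1 : Set (Sym2 V)) (hF1 : F1 = {e ∈ G.edgeSet | 1 / 2 ≤ x e})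
    (G' : SimpleGraph V) (hG' : G' = G.deleteEdges F1)
    (D : ℝ) (hD : 0 ≤ D)
    (Ω : Type*) [Fintype Ω] (μ : Ω → ℝ) (hμ0 : ∀ ω, 0 ≤ μ ω) (hμ1 : ∑ ω, μ ω = 1)
    (P : Ω → V → ℕ)
    (hdiam : ∀ ω, 0 < μ ω → ∀ u v, P ω u = P ω v → wdist G' x u v ≤ 1 / 4)
    (hcut : ∀ u v, G'.Adj u v →
      ∑ ω, (if P ω u ≠ P ω v then μ ω else 0) ≤ 4 * D * x s(u, v))
    (F2 : Ω → Set (Sym2 V))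
    (hF2 : ∀ ω, F2 ω = {e | e ∈ G'.edgeSet ∧ ∃ u v, e = s(u, v) ∧ P ω u ≠ P ω v}) :
    (∀ ω, 0 < μ ω → ∃ f : V → ZMod k,
        ∀ u v, (G.deleteEdges (F1 ∪ F2 ω)).Adj u v → f v - f u = c u v) ∧
      ∑ ω, μ ω * ∑ e ∈ G.edgeFinset, Set.indicator (F1 ∪ F2 ω) cost e ≤
        (2 + 4 * D) * ∑ e ∈ G.edgeFinset, cost e * x e :=
  stmt13_general G c hc cost x hcost hx hincons F1 hF1 G' hG' D hD Ω μ hμ1 P hdiam hcut F2 hF2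
end
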